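/- arXiv:1907.02680 — 2 statements merged into one kernel-verified Lean document; each statement's English description precedes it below -/
import Mathlib

section
/- Lower bound for the modified wave packet: let n ≥ 2, with the two families of wave packets θ_{ω,σ} and θ̃_{ν,σ} as described. There exists a constant c > 0 such that for all ω, ν ∈ S^{n−1} and σ ∈ (0,1) with |ω − ν| ≤ (1/16)√σ, one has θ̃_{ν,σ}(ζ) ≥ c σ^{−(n−1)/4} for every ζ ∈ supp(θ_{ω,σ}); moreover every ζ ∈ supp(θ_{ω,σ}) satisfies |ζ̂ − ν| ≤ (3/8)√σ. -/
open MeasureTheory Real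
open scoped ENNReal NNReal Classical

noncomputable section

abbrev En (n : ℕ) : Type := EuclideanSpace ℝ (Fin n)

/-- The first standard basis vector of ℝⁿ. -/
def e1 (n : ℕ) : En n := if h : 0 < n then EuclideanSpace.single (⟨0, h⟩ : Fin n) (1 : ℝ) else 0

/-- Surface measure on the unit sphere `S^{n-1}`: the `(n-1)`-dimensional Hausdorff measure
restricted to the unit sphere of ℝⁿ. -/
def μSph (n : ℕ) : Measure (En n) := (μH[(n : ℝ) - 1]).restrict (Metric.sphere (0 : En n) 1)

/-- Measure on the cosphere bundle ℝⁿ × S^{n-1}. -/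
def μSp (n : ℕ) : Measure (En n × En n) := (volume : Measure (En n)).prod (μSph n)

/-- Anisotropic ball `B_τ(x,ω)` on the cosphere bundle. -/
def Ball (n : ℕ) (x ω : En n) (τ : ℝ) : Set (En n × En n) :=
  {p : En n × En n | ‖x - p.1‖ ^ 2 + |(inner ℝ ω (x - p.1) : ℝ)| + ‖ω - p.2‖ ^ 2 ≤ τ ^ 2}

/-- The normalizing constant `c_σ`. -/
def cNorm (n : ℕ) (φ : En n → ℝ) (σ : ℝ) : ℝ :=
  (∫ ν, (φ ((Real.sqrt σ)⁻¹ • (e1 n - ν))) ^ 2 ∂μSph n) ^ (-(1 : ℝ) / 2)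

/-- `φ_{ω,σ}`. -/
def phiOS (n : ℕ) (φ : En n → ℝ) (ω : En n) (σ : ℝ) (ζ : En n) : ℝ :=
  if ζ = 0 then 0 else cNorm n φ σ * φ ((Real.sqrt σ)⁻¹ • (‖ζ‖⁻¹ • ζ - ω))

/-- `Ψ_σ`. -/
def PsiS (n : ℕ) (Ψ : En n → ℝ) (σ : ℝ) (ζ : En n) : ℝ := Ψ (σ • ζ)

/-- `ψ_{ω,σ} = Ψ_σ φ_{ω,σ}`. -/
def psiOS (n : ℕ) (φ Ψ : En n → ℝ) (ω : En n) (σ : ℝ) (ζ : En n) : ℝ :=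
  PsiS n Ψ σ ζ * phiOS n φ ω σ ζ

/-- `φ_ω(ζ) = ∫₀⁴ ψ_{ω,τ}(ζ) dτ/τ`. -/
def phiO (n : ℕ) (φ Ψ : En n → ℝ) (ω ζ : En n) : ℝ :=
  ∫ τ in Set.Ioo (0 : ℝ) 4, psiOS n φ Ψ ω τ ζ * τ⁻¹

/-- `θ_{ω,σ} = Ψ_σ φ_ω`. -/
def theta (n : ℕ) (φ Ψ : En n → ℝ) (ω : En n) (σ : ℝ) (ζ : En n) : ℝ :=
  PsiS n Ψ σ ζ * phiO n φ Ψ ω ζ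

/-- The angular average `∫_{S^{n-1}} φ_ν(ζ)² dν`. -/
def angAvg (n : ℕ) (φ Ψ : En n → ℝ) (ζ : En n) : ℝ := ∫ ν, (phiO n φ Ψ ν ζ) ^ 2 ∂μSph n

/-- `χ_{ω,σ} = (∫ φ_ν² dν)⁻¹ θ_{ω,σ}` on `supp θ_{ω,σ}`, and `0` elsewhere. -/
def chi (n : ℕ) (φ Ψ : En n → ℝ) (ω : En n) (σ : ℝ) (ζ : En n) : ℝ :=
  if ζ ∈ tsupport (theta n φ Ψ ω σ) then (angAvg n φ Ψ ζ)⁻¹ * theta n φ Ψ ω σ ζ else 0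

/-- Fourier transform, convention `𝓕f(ξ) = ∫ e^{-ix·ξ} f(x) dx`. -/
def FT (n : ℕ) (f : En n → ℂ) (ξ : En n) : ℂ :=
  ∫ x, Complex.exp (-(Complex.I * ((inner ℝ x ξ : ℝ) : ℂ))) * f x

/-- Inverse Fourier transform. -/
def FTinv (n : ℕ) (g : En n → ℂ) (x : En n) : ℂ :=
  ((2 * Real.pi : ℝ) : ℂ) ^ (-(n : ℤ)) * ∫ ξ, Complex.exp (Complex.I * ((inner ℝ x ξ : ℝ) : ℂ)) * g ξ

/-- Fourier multiplier `m(D)f = 𝓕⁻¹(m 𝓕 f)`. -/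
def mulD (n : ℕ) (m : En n → ℂ) (f : En n → ℂ) : En n → ℂ :=
  FTinv n fun ζ => m ζ * FT n f ζ

/-- Fourier multiplier with a real symbol. -/
def mulDR (n : ℕ) (m : En n → ℝ) (f : En n → ℂ) : En n → ℂ :=
  mulD n (fun ζ => (m ζ : ℂ)) f

/-- Conical square function `Sf(x,ω)`. -/
def Sfun (n : ℕ) (φ Ψ : En n → ℝ) (f : En n → ℂ) (z : En n × En n) : ℝ :=
  Real.sqrt (∫ σ in Set.Ioo (0 : ℝ) 1,
    (⨍ p in Ball n z.1 z.2 (Real.sqrt σ), ‖mulDR n (theta n φ Ψ p.2 σ) f p.1‖ ^ 2 ∂μSp n) * σ⁻¹)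

/-- `L^p(ℝⁿ)` norm. -/
def LpN (n : ℕ) (p : ℝ) (g : En n → ℂ) : ℝ := (∫ x, ‖g x‖ ^ p) ^ (1 / p)

/-- The (equivalent) `H^p_FIO` norm `N_p(f) = ‖q(D)f‖_p + ‖Sf‖_{L^p(S^*ℝⁿ)}`. -/
def Np (n : ℕ) (φ Ψ q : En n → ℝ) (p : ℝ) (f : En n → ℂ) : ℝ :=
  LpN n p (mulDR n q f) + (∫ z, Sfun n φ Ψ f z ^ p ∂μSp n) ^ (1 / p)

/-- The high-frequency remainder symbol `r`. -/
def rSym (n : ℕ) (Ψ : En n → ℝ) (ζ : En n) : ℝ :=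
  if ζ = 0 then 1 else Real.sqrt (∫ σ in Set.Ioi (1 : ℝ), (Ψ (σ • ζ)) ^ 2 * σ⁻¹)

/-- The low-frequency symbol `s`. -/
def sSym (n : ℕ) (φ Ψ : En n → ℝ) (ζ : En n) : ℝ :=
  1 - ∫ σ in Set.Ioo (0 : ℝ) 1, (∫ ω, theta n φ Ψ ω σ ζ * chi n φ Ψ ω σ ζ ∂μSph n) * σ⁻¹

/-- Total surface measure `|S^{n-1}|`. -/
def sphVol (n : ℕ) : ℝ := (μSph n Set.univ).toReal

/-- The wave packet transform `W`. -/
def Wt (n : ℕ) (φ Ψ : En n → ℝ) (f : En n → ℂ) (y ν : En n) (σ : ℝ) : ℂ :=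
  if σ < 1 then mulDR n (psiOS n φ Ψ ν σ) f y
  else if σ ≤ Real.exp 1 then ((sphVol n ^ (-(1 : ℝ) / 2) : ℝ) : ℂ) * mulDR n (rSym n Ψ) f y
  else 0

/-- The wave packet transform `V`. -/
def Vt (n : ℕ) (φ Ψ : En n → ℝ) (f : En n → ℂ) (y ν : En n) (σ : ℝ) : ℂ :=
  if σ < 1 then mulDR n (theta n φ Ψ ν σ) f y
  else if σ ≤ Real.exp 1 then ((sphVol n ^ (-(1 : ℝ) / 2) : ℝ) : ℂ) * mulDR n (sSym n φ Ψ) f y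
  else 0

/-- Tent-space square function of `W f`. -/
def AW (n : ℕ) (φ Ψ : En n → ℝ) (f : En n → ℂ) (z : En n × En n) : ℝ :=
  Real.sqrt (∫ σ in Set.Ioi (0 : ℝ),
    (⨍ p in Ball n z.1 z.2 (Real.sqrt σ), ‖Wt n φ Ψ f p.1 p.2 σ‖ ^ 2 ∂μSp n) * σ⁻¹)

/-- Tent-space square function of `V f`. -/
def AV (n : ℕ) (φ Ψ : En n → ℝ) (f : En n → ℂ) (z : En n × En n) : ℝ :=
  Real.sqrt (∫ σ in Set.Ioi (0 : ℝ),
    (⨍ p in Ball n z.1 z.2 (Real.sqrt σ), ‖Vt n φ Ψ f p.1 p.2 σ‖ ^ 2 ∂μSp n) * σ⁻¹)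

/-- The list of directions encoding the mixed derivative `⟨ω,∇⟩^β ∂^α`. -/
def dirList (n : ℕ) (α : Fin n → ℕ) (β : ℕ) (ω : En n) : List (En n) :=
  List.replicate β ω ++
    (List.ofFn fun i : Fin n => List.replicate (α i) (EuclideanSpace.single i (1 : ℝ))).flatten


/-!
On `supp θ_{ω,σ}` one has `σ|ζ| ∈ [4/5, 5/4]` and `|ζ̂ - ω| ≤ (5/16)√σ`: off this set either
`Ψ_σ(ζ) = 0`, or every `ψ_{ω,τ}(ζ)` in `φ_ω(ζ)` vanishes, because `Ψ(τζ) ≠ 0` forces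
`τ ≤ 25σ/16` and then `|ζ̂ - ω|/√τ > 1/4`. The triangle inequality gives
`|ζ̂ - ν| ≤ (3/8)√σ`. Hence `Ψ̃_σ(ζ) = 1`, and for `τ ∈ [9σ/10, σ]` also `Ψ̃_τ(ζ) = 1` and
`φ̃((ζ̂ - ν)/√τ) = 1`, so `φ̃_ν(ζ) ≥ (σ/10) · min c̃_τ/τ`. Finally
`c̃_τ⁻² ≤ ‖φ̃‖²_∞ |{ν ∈ S^{n-1} : |ν - e₁| ≤ √τ}|`, and this cap is the image of an
`(n-1)`-ball of radius `√τ` under a `2`-Lipschitz graph map, so `c̃_τ ≳ τ^{-(n-1)/4}`.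
-/

namespace WavePacket

section SphereChart

variable {m : ℕ}

lemma e1_succ : e1 (m + 1) = EuclideanSpace.single 0 1 := dif_pos m.succ_pos

lemma norm_e1_succ : ‖e1 (m + 1)‖ = 1 := by
  simp [e1_succ]

def tail (x : En (m + 1)) : En m := WithLp.toLp 2 fun j => x j.succ

def sphereGraph (y : En m) : En (m + 1) :=
  WithLp.toLp 2 (Fin.cons (√(1 - ‖y‖ ^ 2)) y)

lemma norm_sq_eq_head_add_tail (x : En (m + 1)) : ‖x‖ ^ 2 = x 0 ^ 2 + ‖tail x‖ ^ 2 := by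
  simp [EuclideanSpace.real_norm_sq_eq, Fin.sum_univ_succ, tail]

lemma tail_sub (x y : En (m + 1)) : tail (x - y) = tail x - tail y := rfl

lemma tail_e1 : tail (e1 (m + 1)) = 0 := by
  ext j; simp [tail, e1_succ, Fin.succ_ne_zero]

lemma tail_sphereGraph (y : En m) : tail (sphereGraph y) = y := rfl

lemma sphereGraph_zero (y : En m) : sphereGraph y 0 = √(1 - ‖y‖ ^ 2) := rfl

lemma lipschitzWith_tail : LipschitzWith 1 (tail : En (m + 1) → En m) := by
  refine LipschitzWith.of_dist_le_mul fun x y => ?_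
  rw [dist_eq_norm, dist_eq_norm, ← tail_sub, NNReal.coe_one, one_mul]
  have := norm_sq_eq_head_add_tail (x - y)
  nlinarith [norm_nonneg (tail (x - y)), norm_nonneg (x - y), sq_nonneg ((x - y) 0)]

lemma norm_e1_sub_sq (x : En (m + 1)) : ‖e1 (m + 1) - x‖ ^ 2 = (1 - x 0) ^ 2 + ‖tail x‖ ^ 2 := by
  rw [norm_sq_eq_head_add_tail, tail_sub, tail_e1, zero_sub, norm_neg]
  simp [e1_succ]

lemma norm_sphereGraph_sub_sq (y z : En m) :
    ‖sphereGraph y - sphereGraph z‖ ^ 2 = (√(1 - ‖y‖ ^ 2) - √(1 - ‖z‖ ^ 2)) ^ 2 + ‖y - z‖ ^ 2 :=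
  norm_sq_eq_head_add_tail _

lemma norm_sphereGraph {y : En m} (hy : ‖y‖ ≤ 1) : ‖sphereGraph y‖ = 1 := by
  have h : ‖sphereGraph y‖ ^ 2 = 1 := by
    rw [norm_sq_eq_head_add_tail, sphereGraph_zero, tail_sphereGraph,
      Real.sq_sqrt (by nlinarith [norm_nonneg y])]
    ring
  nlinarith [norm_nonneg (sphereGraph y)]

lemma lipschitzOnWith_sphereGraph :
    LipschitzOnWith 2 (sphereGraph : En m → En (m + 1)) {y | ‖y‖ ^ 2 ≤ 3 / 4} := by
  refine LipschitzOnWith.of_dist_le_mul fun y hy z hz => ?_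
  simp only [Set.mem_ofPred_eq] at hy hz
  rw [dist_eq_norm, dist_eq_norm, NNReal.coe_ofNat]
  set s := √(1 - ‖y‖ ^ 2)
  set t := √(1 - ‖z‖ ^ 2)
  have hs : 1 / 2 ≤ s := Real.le_sqrt_of_sq_le (by linarith)
  have ht : 1 / 2 ≤ t := Real.le_sqrt_of_sq_le (by linarith)
  have hs2 : s ^ 2 = 1 - ‖y‖ ^ 2 := Real.sq_sqrt (by linarith)
  have ht2 : t ^ 2 = 1 - ‖z‖ ^ 2 := Real.sq_sqrt (by linarith)
  -- `(s - t)² ≤ (s² - t²)²` because `s + t ≥ 1`, and `|‖y‖² - ‖z‖²| ≤ √3 ‖y - z‖`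
  have hst : (s - t) ^ 2 ≤ (‖y‖ ^ 2 - ‖z‖ ^ 2) ^ 2 := by
    have : (s - t) ^ 2 * 1 ≤ (s - t) ^ 2 * (s + t) ^ 2 :=
      mul_le_mul_of_nonneg_left (by nlinarith) (sq_nonneg _)
    nlinarith
  have hyz : (‖y‖ - ‖z‖) ^ 2 ≤ ‖y - z‖ ^ 2 :=
    sq_le_sq' (abs_le.1 (abs_norm_sub_norm_le y z)).1 (abs_le.1 (abs_norm_sub_norm_le y z)).2
  have hsum : (‖y‖ + ‖z‖) ^ 2 ≤ 3 := by nlinarith [sq_nonneg (‖y‖ - ‖z‖)]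
  have key : ‖sphereGraph y - sphereGraph z‖ ^ 2 ≤ (2 * ‖y - z‖) ^ 2 := by
    rw [norm_sphereGraph_sub_sq]
    have : (‖y‖ ^ 2 - ‖z‖ ^ 2) ^ 2 ≤ 3 * ‖y - z‖ ^ 2 := by
      rw [show (‖y‖ ^ 2 - ‖z‖ ^ 2) ^ 2 = (‖y‖ - ‖z‖) ^ 2 * (‖y‖ + ‖z‖) ^ 2 by ring]
      nlinarith [sq_nonneg (‖y‖ - ‖z‖), sq_nonneg ‖y - z‖]
    nlinarith
  exact (sq_le_sq₀ (norm_nonneg _) (by positivity)).1 key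

lemma sphereGraph_tail {x : En (m + 1)} (hx : ‖x‖ = 1) (hx0 : 0 ≤ x 0) :
    sphereGraph (tail x) = x := by
  have h : 1 - ‖tail x‖ ^ 2 = x 0 ^ 2 := by
    have := norm_sq_eq_head_add_tail x
    rw [hx] at this
    linarith
  ext i
  refine Fin.cases ?_ (fun j => rfl) i
  rw [sphereGraph_zero, h, Real.sqrt_sq hx0]

lemma sphere_inter_closedBall_e1_subset {r : ℝ} (hr : r ≤ 1) :
    Metric.sphere (0 : En (m + 1)) 1 ∩ Metric.closedBall (e1 (m + 1)) r ⊆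
      sphereGraph '' ({y | ‖y‖ ^ 2 ≤ 3 / 4} ∩ Metric.closedBall 0 r) := by
  rintro x ⟨hx, hxr⟩
  rw [mem_sphere_zero_iff_norm] at hx
  rw [Metric.mem_closedBall, dist_comm, dist_eq_norm] at hxr
  have hsq := norm_sq_eq_head_add_tail x
  have hd := norm_e1_sub_sq x
  have hr0 : 0 ≤ r := (norm_nonneg _).trans hxr
  have hdr : ‖e1 (m + 1) - x‖ ^ 2 ≤ r ^ 2 := pow_le_pow_left₀ (norm_nonneg _) hxr 2
  have hx0 : 1 / 2 ≤ x 0 := by nlinarith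
  refine ⟨tail x, ⟨?_, ?_⟩, sphereGraph_tail hx (by linarith)⟩
  · simp only [Set.mem_ofPred_eq]; nlinarith
  · rw [mem_closedBall_zero_iff]
    exact (sq_le_sq₀ (norm_nonneg _) hr0).1 (by nlinarith)

lemma sphereGraph_image_closedBall_subset {ρ : ℝ} (hρ : ρ ≤ 1) :
    sphereGraph '' Metric.closedBall (0 : En m) (ρ / 2) ⊆
      Metric.sphere (0 : En (m + 1)) 1 ∩ Metric.closedBall (e1 (m + 1)) ρ := by
  rintro _ ⟨y, hy, rfl⟩
  rw [mem_closedBall_zero_iff] at hy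
  have hy1 : ‖y‖ ^ 2 ≤ 1 / 4 := by nlinarith [norm_nonneg y]
  refine ⟨mem_sphere_zero_iff_norm.2 (norm_sphereGraph (by nlinarith [norm_nonneg y])), ?_⟩
  rw [Metric.mem_closedBall, dist_comm, dist_eq_norm]
  have hρ0 : 0 ≤ ρ := by linarith [norm_nonneg y]
  have hyρ : ‖y‖ ^ 2 ≤ ρ ^ 2 / 4 := by nlinarith [norm_nonneg y]
  refine (sq_le_sq₀ (norm_nonneg _) hρ0).1 ?_
  rw [norm_e1_sub_sq, sphereGraph_zero, tail_sphereGraph]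
  set t := ‖y‖ ^ 2
  have ht0 : 0 ≤ t := sq_nonneg _
  have h1 : 1 - t ≤ √(1 - t) := Real.le_sqrt_of_sq_le (by nlinarith)
  have h2 : √(1 - t) ≤ 1 := Real.sqrt_le_one.2 (by linarith)
  nlinarith

end SphereChart

section Caps

variable {m : ℕ}

instance isAddHaarMeasure_hausdorffMeasure : (μH[(m : ℝ)] : Measure (En m)).IsAddHaarMeasure := by
  have h : ((Module.finrank ℝ (En m) : ℕ) : ℝ) = m := by rw [finrank_euclideanSpace_fin]
  exact h ▸ inferInstance

lemma hausdorffMeasure_closedBall {r : ℝ} (hr : 0 ≤ r) :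
    μH[(m : ℝ)] (Metric.closedBall (0 : En m) r) =
      ENNReal.ofReal (r ^ m) * μH[(m : ℝ)] (Metric.closedBall (0 : En m) 1) := by
  rw [Measure.addHaar_closedBall' _ _ hr, finrank_euclideanSpace_fin]

lemma μSph_succ :
    μSph (m + 1) = (μH[(m : ℝ)] : Measure (En (m + 1))).restrict (Metric.sphere 0 1) := by
  simp [μSph]

lemma μSph_closedBall (x : En (m + 1)) (r : ℝ) :
    μSph (m + 1) (Metric.closedBall x r) =
      μH[(m : ℝ)] (Metric.sphere 0 1 ∩ Metric.closedBall x r) := by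
  rw [μSph_succ, Measure.restrict_apply measurableSet_closedBall, Set.inter_comm]

lemma μSph_closedBall_e1_le {r : ℝ} (hr0 : 0 ≤ r) (hr1 : r ≤ 1) :
    μSph (m + 1) (Metric.closedBall (e1 (m + 1)) r) ≤
      2 ^ m * ENNReal.ofReal (r ^ m) * μH[(m : ℝ)] (Metric.closedBall (0 : En m) 1) := by
  rw [μSph_closedBall, mul_assoc, ← hausdorffMeasure_closedBall hr0]
  calc μH[(m : ℝ)] (Metric.sphere 0 1 ∩ Metric.closedBall (e1 (m + 1)) r)
      ≤ μH[(m : ℝ)] (sphereGraph '' ({y | ‖y‖ ^ 2 ≤ 3 / 4} ∩ Metric.closedBall (0 : En m) r)) :=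
        measure_mono (sphere_inter_closedBall_e1_subset hr1)
    _ ≤ ((2 : ℝ≥0) : ℝ≥0∞) ^ (m : ℝ) *
          μH[(m : ℝ)] ({y | ‖y‖ ^ 2 ≤ 3 / 4} ∩ Metric.closedBall 0 r) :=
        (lipschitzOnWith_sphereGraph.mono Set.inter_subset_left).hausdorffMeasure_image_le
          m.cast_nonneg
    _ ≤ 2 ^ m * μH[(m : ℝ)] (Metric.closedBall (0 : En m) r) := by
        rw [ENNReal.rpow_natCast]
        gcongr
        · simp
        · exact Set.inter_subset_right

lemma μSph_closedBall_e1_pos {ρ : ℝ} (hρ : 0 < ρ) :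
    0 < μSph (m + 1) (Metric.closedBall (e1 (m + 1)) ρ) := by
  set ρ' := min ρ 1
  have hρ' : 0 < ρ' := lt_min hρ one_pos
  -- the chart over a small ball lands in the cap, and `tail` undoes the chart without
  -- increasing Hausdorff measure
  calc 0 < μH[(m : ℝ)] (Metric.closedBall (0 : En m) (ρ' / 2)) :=
        Metric.measure_closedBall_pos _ _ (by positivity)
    _ = μH[(m : ℝ)] (tail '' (sphereGraph '' Metric.closedBall (0 : En m) (ρ' / 2))) := by
        simp [Set.image_image, tail_sphereGraph]
    _ ≤ μH[(m : ℝ)] (sphereGraph '' Metric.closedBall (0 : En m) (ρ' / 2)) := by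
        simpa using lipschitzWith_tail.hausdorffMeasure_image_le m.cast_nonneg _
    _ ≤ μH[(m : ℝ)] (Metric.sphere 0 1 ∩ Metric.closedBall (e1 (m + 1)) ρ') :=
        measure_mono (sphereGraph_image_closedBall_subset (min_le_right _ _))
    _ ≤ μSph (m + 1) (Metric.closedBall (e1 (m + 1)) ρ) := by
        rw [μSph_closedBall]
        exact measure_mono (Set.inter_subset_inter_right _
          (Metric.closedBall_subset_closedBall (min_le_left _ _)))

lemma μSph_closedBall_of_norm_eq_one {p : En (m + 1)} (hp : ‖p‖ = 1) (r : ℝ) :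
    μSph (m + 1) (Metric.closedBall p r) = μSph (m + 1) (Metric.closedBall (e1 (m + 1)) r) := by
  let R := (Submodule.reflection (ℝ ∙ (e1 (m + 1) - p))ᗮ).toIsometryEquiv
  have hR : R (e1 (m + 1)) = p := Submodule.reflection_sub (by rw [norm_e1_succ, hp])
  rw [μSph_closedBall, μSph_closedBall,
    ← R.hausdorffMeasure_image _ (Metric.sphere 0 1 ∩ Metric.closedBall (e1 (m + 1)) r),
    Set.image_inter R.injective, R.image_sphere, R.image_closedBall, hR]
  simp [R]

instance isFiniteMeasure_μSph : IsFiniteMeasure (μSph (m + 1)) := by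
  obtain ⟨t, hts, htf, hcover⟩ :=
    (isCompact_sphere (0 : En (m + 1)) 1).finite_cover_balls one_pos
  refine ⟨?_⟩
  calc μSph (m + 1) Set.univ = μSph (m + 1) (Metric.sphere 0 1) := by
        rw [μSph_succ, Measure.restrict_apply_univ, Measure.restrict_apply_self]
    _ ≤ μSph (m + 1) (⋃ p ∈ t, Metric.closedBall p 1) :=
        measure_mono (hcover.trans (Set.biUnion_mono subset_rfl
          fun _ _ => Metric.ball_subset_closedBall))
    _ < ⊤ := by
        refine measure_biUnion_lt_top htf fun p hp => ?_
        rw [μSph_closedBall_of_norm_eq_one (by simpa using hts hp)]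
        refine (μSph_closedBall_e1_le zero_le_one le_rfl).trans_lt ?_
        have : μH[(m : ℝ)] (Metric.closedBall (0 : En m) 1) < ⊤ :=
          (isCompact_closedBall _ _).measure_lt_top
        finiteness

end Caps

section NormalizingConstant

variable {n : ℕ} {f : En n → ℝ} {M r τ : ℝ}

def cNormIntegral (n : ℕ) (f : En n → ℝ) (τ : ℝ) : ℝ :=
  ∫ ν, f ((√τ)⁻¹ • (e1 n - ν)) ^ 2 ∂μSph n

lemma cNorm_nonneg : 0 ≤ cNorm n f τ :=
  Real.rpow_nonneg (integral_nonneg fun _ => sq_nonneg _) _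

lemma continuousAt_inv_sqrt (hτ : 0 < τ) : ContinuousAt (fun t : ℝ => (√t)⁻¹) τ :=
  Real.continuous_sqrt.continuousAt.inv₀ (Real.sqrt_pos.2 hτ).ne'

lemma norm_apply_sq_le (hM : ∀ x, ‖f x‖ ≤ M) (x : En n) : ‖f x ^ 2‖ ≤ M ^ 2 := by
  rw [norm_pow]
  exact pow_le_pow_left₀ (norm_nonneg _) (hM x) 2

variable [IsFiniteMeasure (μSph n)]

lemma integrable_cNormIntegrand (hf : Continuous f) (hM : ∀ x, ‖f x‖ ≤ M) (τ : ℝ) :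
    Integrable (fun ν => f ((√τ)⁻¹ • (e1 n - ν)) ^ 2) (μSph n) :=
  .of_bound (by fun_prop) _ (.of_forall fun _ => norm_apply_sq_le hM _)

lemma measureReal_closedBall_le_cNormIntegral (hf : Continuous f) (hM : ∀ x, ‖f x‖ ≤ M)
    (hone : ∀ x, ‖x‖ ≤ r → f x = 1) (hτ : 0 < τ) :
    (μSph n).real (Metric.closedBall (e1 n) (r * √τ)) ≤ cNormIntegral n f τ := by
  rw [← integral_indicator_one measurableSet_closedBall]
  refine integral_mono ((integrable_const 1).indicator measurableSet_closedBall)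
    (integrable_cNormIntegrand hf hM τ) fun ν => ?_
  by_cases hν : ν ∈ Metric.closedBall (e1 n) (r * √τ)
  · rw [Set.indicator_of_mem hν, Pi.one_apply, hone, one_pow]
    rw [Metric.mem_closedBall, dist_comm, dist_eq_norm] at hν
    rw [norm_smul_of_nonneg (by positivity), inv_mul_le_iff₀ (by positivity)]
    linarith
  · simp [Set.indicator_of_notMem hν, sq_nonneg]

lemma cNormIntegral_le (hM : ∀ x, ‖f x‖ ≤ M) (hsupp : ∀ x, 1 < ‖x‖ → f x = 0) (hτ : 0 < τ) :
    cNormIntegral n f τ ≤ M ^ 2 * (μSph n).real (Metric.closedBall (e1 n) √τ) := by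
  rw [mul_comm, ← smul_eq_mul, ← integral_indicator_const _ measurableSet_closedBall]
  refine integral_mono_of_nonneg (.of_forall fun _ => sq_nonneg _)
    ((integrable_const _).indicator measurableSet_closedBall) (.of_forall fun ν => ?_)
  dsimp only
  by_cases hν : ν ∈ Metric.closedBall (e1 n) √τ
  · rw [Set.indicator_of_mem hν]
    exact (le_abs_self _).trans (norm_apply_sq_le hM _)
  · rw [Set.indicator_of_notMem hν, hsupp, zero_pow two_ne_zero]
    rw [Metric.mem_closedBall, dist_comm, dist_eq_norm, not_le] at hν
    rwa [norm_smul_of_nonneg (by positivity), lt_inv_mul_iff₀ (by positivity), mul_one]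

lemma continuousAt_cNormIntegral (hf : Continuous f) (hM : ∀ x, ‖f x‖ ≤ M) (hτ : 0 < τ) :
    ContinuousAt (cNormIntegral n f) τ := by
  refine continuousAt_of_dominated (bound := fun _ => M ^ 2)
    (.of_forall fun t => (integrable_cNormIntegrand hf hM t).aestronglyMeasurable)
    (.of_forall fun _ => .of_forall fun _ => norm_apply_sq_le hM _) (integrable_const _)
    (.of_forall fun ν => ?_)
  exact (hf.continuousAt.comp ((continuousAt_inv_sqrt hτ).smul continuousAt_const)).pow 2

end NormalizingConstant

section NormalizingConstantSucc

variable {m : ℕ} {f : En (m + 1) → ℝ} {M r τ : ℝ}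

lemma cNormIntegral_pos (hf : Continuous f) (hM : ∀ x, ‖f x‖ ≤ M)
    (hone : ∀ x, ‖x‖ ≤ r → f x = 1) (hr : 0 < r) (hτ : 0 < τ) :
    0 < cNormIntegral (m + 1) f τ :=
  (ENNReal.toReal_pos (μSph_closedBall_e1_pos (by positivity)).ne' (measure_ne_top _ _)).trans_le
    (measureReal_closedBall_le_cNormIntegral hf hM hone hτ)

lemma continuousAt_cNorm (hf : Continuous f) (hM : ∀ x, ‖f x‖ ≤ M)
    (hone : ∀ x, ‖x‖ ≤ r → f x = 1) (hr : 0 < r) (hτ : 0 < τ) :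
    ContinuousAt (cNorm (m + 1) f) τ :=
  (Real.continuousAt_rpow_const _ _ (.inl (cNormIntegral_pos hf hM hone hr hτ).ne')).comp
    (continuousAt_cNormIntegral hf hM hτ)

/-- The caps of radius `√τ` have measure `≲ τ^{m/2}`, so `c_τ ≳ τ^{-m/4}`. -/
lemma exists_mul_rpow_le_cNorm (hf : Continuous f) (hM : ∀ x, ‖f x‖ ≤ M)
    (hone : ∀ x, ‖x‖ ≤ r → f x = 1) (hr : 0 < r) (hsupp : ∀ x, 1 < ‖x‖ → f x = 0) :
    ∃ C > 0, ∀ τ, 0 < τ → τ ≤ 1 → C * τ ^ (-(m : ℝ) / 4) ≤ cNorm (m + 1) f τ := by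
  set B := (μH[(m : ℝ)] (Metric.closedBall (0 : En m) 1)).toReal
  have hB : 0 < B := ENNReal.toReal_pos (Metric.measure_closedBall_pos _ _ one_pos).ne'
    (isCompact_closedBall _ _).measure_lt_top.ne
  have hM1 : 1 ≤ M := by simpa [hone 0 (by simpa using hr.le)] using hM 0
  set K := M ^ 2 * 2 ^ m * B
  have hK : 0 < K := by positivity
  refine ⟨K ^ (-(1 : ℝ) / 2), by positivity, fun τ hτ hτ1 => ?_⟩
  have hcap : (μSph (m + 1)).real (Metric.closedBall (e1 (m + 1)) √τ) ≤ 2 ^ m * √τ ^ m * B := by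
    have h := μSph_closedBall_e1_le (m := m) (Real.sqrt_nonneg τ) (Real.sqrt_le_one.2 hτ1)
    have hfin : μH[(m : ℝ)] (Metric.closedBall (0 : En m) 1) ≠ ⊤ :=
      (isCompact_closedBall _ _).measure_lt_top.ne
    have := ENNReal.toReal_mono (by finiteness) h
    simpa [measureReal_def, ENNReal.toReal_mul,
      ENNReal.toReal_ofReal (by positivity : 0 ≤ √τ ^ m)] using this
  have hI : cNormIntegral (m + 1) f τ ≤ K * √τ ^ m :=
    calc _ ≤ M ^ 2 * (μSph (m + 1)).real (Metric.closedBall (e1 (m + 1)) √τ) :=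
          cNormIntegral_le hM hsupp hτ
      _ ≤ M ^ 2 * (2 ^ m * √τ ^ m * B) := by gcongr
      _ = K * √τ ^ m := by ring
  have hroot : (√τ ^ m) ^ (-(1 : ℝ) / 2) = τ ^ (-(m : ℝ) / 4) := by
    rw [Real.sqrt_eq_rpow, ← Real.rpow_natCast, ← Real.rpow_mul hτ.le, ← Real.rpow_mul hτ.le]
    ring_nf
  calc K ^ (-(1 : ℝ) / 2) * τ ^ (-(m : ℝ) / 4) = (K * √τ ^ m) ^ (-(1 : ℝ) / 2) := by
        rw [Real.mul_rpow hK.le (by positivity), hroot]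
    _ ≤ cNorm (m + 1) f τ :=
        Real.rpow_le_rpow_of_nonpos (cNormIntegral_pos hf hM hone hr hτ) hI (by norm_num)

end NormalizingConstantSucc

section WavePackets

variable {n : ℕ} {φ Ψ : En n → ℝ} {ω ζ : En n} {σ τ a b : ℝ}

lemma PsiS_eq_zero (hΨ : ∀ x, ‖x‖ ∉ Set.Icc a b → Ψ x = 0) (hτ : 0 ≤ τ)
    (h : τ * ‖ζ‖ ∉ Set.Icc a b) : PsiS n Ψ τ ζ = 0 :=
  hΨ _ (by rwa [norm_smul_of_nonneg hτ])

lemma PsiS_eq_one (hΨ : ∀ x, ‖x‖ ∈ Set.Icc a b → Ψ x = 1) (hτ : 0 ≤ τ)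
    (h : τ * ‖ζ‖ ∈ Set.Icc a b) : PsiS n Ψ τ ζ = 1 :=
  hΨ _ (by rwa [norm_smul_of_nonneg hτ])

lemma phiOS_eq_zero_of_sqrt_lt (hφ : ∀ x, 1 / 4 < ‖x‖ → φ x = 0) (hτ : 0 < τ)
    (h : √τ < 4 * ‖‖ζ‖⁻¹ • ζ - ω‖) : phiOS n φ ω τ ζ = 0 := by
  rw [phiOS]
  split_ifs
  · rfl
  · rw [hφ, mul_zero]
    rw [norm_smul_of_nonneg (by positivity), lt_inv_mul_iff₀ (Real.sqrt_pos.2 hτ)]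
    linarith

lemma psiOS_nonneg (hφ : ∀ x, 0 ≤ φ x) (hΨ : ∀ x, 0 ≤ Ψ x) : 0 ≤ psiOS n φ Ψ ω τ ζ := by
  refine mul_nonneg (hΨ _) ?_
  rw [phiOS]
  split_ifs
  · exact le_rfl
  · exact mul_nonneg cNorm_nonneg (hφ _)

lemma psiOS_eq_cNorm {r : ℝ} (hφ : ∀ x, ‖x‖ ≤ r → φ x = 1)
    (hΨ : ∀ x, ‖x‖ ∈ Set.Icc a b → Ψ x = 1) (hτ : 0 < τ) (hζ : ζ ≠ 0)
    (hτζ : τ * ‖ζ‖ ∈ Set.Icc a b) (hdir : ‖‖ζ‖⁻¹ • ζ - ω‖ ≤ r * √τ) :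
    psiOS n φ Ψ ω τ ζ = cNorm n φ τ := by
  rw [psiOS, PsiS_eq_one hΨ hτ.le hτζ, one_mul, phiOS, if_neg hζ, hφ, mul_one]
  rwa [norm_smul_of_nonneg (by positivity), inv_mul_le_iff₀ (Real.sqrt_pos.2 hτ), mul_comm]

lemma isClosed_annulusSector (ω : En n) (σ ε : ℝ) (ha : 0 < a) :
    IsClosed {ζ : En n | σ * ‖ζ‖ ∈ Set.Icc a b ∧ ‖‖ζ‖⁻¹ • ζ - ω‖ ≤ ε} := by
  set s := {ζ : En n | σ * ‖ζ‖ ∈ Set.Icc a b}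
  have hs : IsClosed s := isClosed_Icc.preimage (by fun_prop)
  have hcont : ContinuousOn (fun ζ : En n => ‖ζ‖⁻¹ • ζ) s := by
    refine (continuous_norm.continuousOn.inv₀ fun ζ hζ => ?_).smul continuousOn_id
    have : a ≤ σ * ‖ζ‖ := hζ.1
    intro h
    rw [h, mul_zero] at this
    linarith
  convert hcont.preimage_isClosed_of_isClosed hs (Metric.isClosed_closedBall (x := ω) (ε := ε))
    using 1
  ext ζ
  simp [s, dist_eq_norm]

lemma tsupport_theta_subset (hΨ : ∀ x, ‖x‖ ∉ Set.Icc (4 / 5 : ℝ) (5 / 4) → Ψ x = 0)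
    (hφ : ∀ x, 1 / 4 < ‖x‖ → φ x = 0) (hσ : 0 < σ) :
    tsupport (theta n φ Ψ ω σ) ⊆
      {ζ | σ * ‖ζ‖ ∈ Set.Icc (4 / 5 : ℝ) (5 / 4) ∧ ‖‖ζ‖⁻¹ • ζ - ω‖ ≤ 5 / 16 * √σ} := by
  refine closure_minimal (fun ζ hζ => ?_) (isClosed_annulusSector ω σ _ (by norm_num))
  by_contra hS
  apply hζ
  by_cases hA : σ * ‖ζ‖ ∈ Set.Icc (4 / 5 : ℝ) (5 / 4)
  · have hfar : 5 / 16 * √σ < ‖‖ζ‖⁻¹ • ζ - ω‖ := not_le.1 fun h => hS ⟨hA, h⟩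
    rw [theta, phiO, setIntegral_eq_zero_of_forall_eq_zero fun τ hτ => ?_, mul_zero]
    rw [psiOS]
    by_cases hB : τ * ‖ζ‖ ∈ Set.Icc (4 / 5 : ℝ) (5 / 4)
    · -- `Ψ(τζ) ≠ 0` forces `τ ≤ 25σ/16`, so the angular cutoff at scale `√τ` vanishes
      have hτσ : τ ≤ (5 / 4) ^ 2 * σ := by
        nlinarith [mul_le_mul_of_nonneg_left hA.1 hτ.1.le, mul_le_mul_of_nonneg_left hB.2 hσ.le]
      have hsqrt : √τ ≤ 5 / 4 * √σ :=
        calc √τ ≤ √((5 / 4) ^ 2 * σ) := Real.sqrt_le_sqrt hτσ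
          _ = 5 / 4 * √σ := by rw [Real.sqrt_mul' _ hσ.le, Real.sqrt_sq (by norm_num)]
      rw [phiOS_eq_zero_of_sqrt_lt hφ hτ.1 (by linarith), mul_zero, zero_mul]
    · rw [PsiS_eq_zero hΨ hτ.1.le hB, zero_mul, zero_mul]
  · rw [theta, PsiS_eq_zero hΨ hσ.le hA, zero_mul]

end WavePackets

section WavePacketsSucc

variable {m : ℕ} {f g : En (m + 1) → ℝ} {ν ζ : En (m + 1)} {M r a b : ℝ}

lemma integrableOn_psiOS_mul_inv (hf : Continuous f) (hM : ∀ x, ‖f x‖ ≤ M)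
    (hone : ∀ x, ‖x‖ ≤ r → f x = 1) (hr : 0 < r) (hg : Continuous g)
    (hg_supp : ∀ x, ‖x‖ ∉ Set.Icc a b → g x = 0) (ha : 0 < a) (hζ : ζ ≠ 0) :
    IntegrableOn (fun τ => psiOS (m + 1) f g ν τ ζ * τ⁻¹) (Set.Ioo 0 4) := by
  have hζ' : 0 < ‖ζ‖ := norm_pos_iff.2 hζ
  set t := a / ‖ζ‖
  -- the integrand vanishes on `(0, t)` and is continuous on `[t, 4]`
  have hsmall : IntegrableOn (fun τ => psiOS (m + 1) f g ν τ ζ * τ⁻¹) (Set.Ioo 0 t) := by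
    refine integrableOn_zero.congr_fun (fun τ hτ => ?_) measurableSet_Ioo
    have : τ * ‖ζ‖ < a := (lt_div_iff₀ hζ').1 hτ.2
    rw [psiOS, PsiS_eq_zero hg_supp hτ.1.le fun h => this.not_ge h.1, zero_mul, zero_mul]
  have hlarge : IntegrableOn (fun τ => psiOS (m + 1) f g ν τ ζ * τ⁻¹) (Set.Icc t 4) := by
    refine ContinuousOn.integrableOn_Icc fun τ hτ => ContinuousAt.continuousWithinAt ?_
    have hτ : 0 < τ := (div_pos ha hζ').trans_le hτ.1
    have heq : (fun τ => psiOS (m + 1) f g ν τ ζ * τ⁻¹) =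
        fun τ => g (τ • ζ) * (cNorm (m + 1) f τ * f ((√τ)⁻¹ • (‖ζ‖⁻¹ • ζ - ν))) * τ⁻¹ := by
      funext τ
      simp [psiOS, PsiS, phiOS, hζ]
    rw [heq]
    refine ((hg.comp (continuous_id.smul continuous_const)).continuousAt.mul
      ((continuousAt_cNorm hf hM hone hr hτ).mul
        (hf.continuousAt.comp ((continuousAt_inv_sqrt hτ).smul continuousAt_const)))).mul
      (continuousAt_inv₀ hτ.ne')
  refine (hsmall.union hlarge).mono_set fun τ hτ => ?_
  rcases lt_or_ge τ t with h | h
  · exact .inl ⟨hτ.1, h⟩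
  · exact .inr ⟨h, hτ.2.le⟩

/-- On `[9σ/10, σ]` the integrand of `φ̃_ν(ζ)` is `c̃_τ / τ ≳ σ^{-m/4} / σ`. -/
lemma exists_mul_rpow_le_phiO (hf : Continuous f) (hM : ∀ x, ‖f x‖ ≤ M) (hf_nn : ∀ x, 0 ≤ f x)
    (hf_one : ∀ x, ‖x‖ ≤ 3 / 4 → f x = 1) (hf_supp : ∀ x, 1 < ‖x‖ → f x = 0)
    (hg : Continuous g) (hg_nn : ∀ x, 0 ≤ g x)
    (hg_one : ∀ x, ‖x‖ ∈ Set.Icc (2 / 3 : ℝ) (3 / 2) → g x = 1)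
    (hg_supp : ∀ x, ‖x‖ ∉ Set.Icc (1 / 2 : ℝ) 2 → g x = 0) :
    ∃ C > 0, ∀ ν ζ : En (m + 1), ∀ σ, 0 < σ → σ < 1 →
      σ * ‖ζ‖ ∈ Set.Icc (4 / 5 : ℝ) (5 / 4) → ‖‖ζ‖⁻¹ • ζ - ν‖ ≤ 3 / 8 * √σ →
        C * σ ^ (-(m : ℝ) / 4) ≤ phiO (m + 1) f g ν ζ := by
  obtain ⟨C, hC, hcN⟩ := exists_mul_rpow_le_cNorm hf hM hf_one (by norm_num) hf_supp
  refine ⟨C / 10, by positivity, fun ν ζ σ hσ hσ1 hζσ hdir => ?_⟩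
  have hζ : ζ ≠ 0 := by
    rintro rfl
    norm_num at hζσ
  set F := fun τ => psiOS (m + 1) f g ν τ ζ * τ⁻¹
  have hF : ∀ τ ∈ Set.Icc (9 / 10 * σ) σ, C * σ ^ (-(m : ℝ) / 4) * σ⁻¹ ≤ F τ := by
    rintro τ ⟨hτ1, hτ2⟩
    have hτ : 0 < τ := by linarith
    have hdirτ : ‖‖ζ‖⁻¹ • ζ - ν‖ ≤ 3 / 4 * √τ := by
      have : √σ ≤ 2 * √τ :=
        Real.sqrt_le_iff.2 ⟨by positivity, by rw [mul_pow, Real.sq_sqrt hτ.le]; linarith⟩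
      linarith
    have hpow : σ ^ (-(m : ℝ) / 4) ≤ τ ^ (-(m : ℝ) / 4) :=
      Real.rpow_le_rpow_of_nonpos hτ hτ2 (by rw [neg_div]; exact neg_nonpos.2 (by positivity))
    calc C * σ ^ (-(m : ℝ) / 4) * σ⁻¹ ≤ C * τ ^ (-(m : ℝ) / 4) * τ⁻¹ := by
          gcongr C * ?_ * ?_
          exact inv_anti₀ hτ hτ2
      _ ≤ cNorm (m + 1) f τ * τ⁻¹ := by gcongr; exact hcN τ hτ (by linarith)
      _ = F τ := by
          simp only [F]
          rw [psiOS_eq_cNorm hf_one hg_one hτ hζ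
            ⟨by nlinarith [hζσ.1], by nlinarith [hζσ.2]⟩ hdirτ]
  have hint : IntegrableOn F (Set.Ioo 0 4) :=
    integrableOn_psiOS_mul_inv hf hM hf_one (by norm_num) hg hg_supp (by norm_num) hζ
  have hsub : Set.Icc (9 / 10 * σ) σ ⊆ Set.Ioo 0 4 := fun τ hτ =>
    ⟨by linarith [hτ.1], by linarith [hτ.2]⟩
  calc C / 10 * σ ^ (-(m : ℝ) / 4)
      = C * σ ^ (-(m : ℝ) / 4) * σ⁻¹ * volume.real (Set.Icc (9 / 10 * σ) σ) := by
        rw [Real.volume_real_Icc_of_le (by linarith)]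
        field_simp
        ring
    _ ≤ ∫ τ in Set.Icc (9 / 10 * σ) σ, F τ :=
        setIntegral_ge_of_const_le_real measurableSet_Icc measure_Icc_lt_top.ne hF
          (hint.mono_set hsub)
    _ ≤ ∫ τ in Set.Ioo 0 4, F τ :=
        setIntegral_mono_set hint
          ((ae_restrict_iff' measurableSet_Ioo).2 (.of_forall fun τ hτ =>
            mul_nonneg (psiOS_nonneg hf_nn hg_nn) (inv_nonneg.2 hτ.1.le)))
          hsub.eventuallyLE

end WavePacketsSucc

end WavePacket

open WavePacket in
theorem modified_wave_packet_lower_bound_general (n : ℕ) (hn : 2 ≤ n)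
    (φ Ψ : En n → ℝ)
    (hφ_supp : ∀ ζ : En n, (1 : ℝ) / 4 < ‖ζ‖ → φ ζ = 0)
    (hΨ_supp : ∀ ζ : En n, ‖ζ‖ ∉ Set.Icc (4 / 5 : ℝ) (5 / 4 : ℝ) → Ψ ζ = 0)
    (φt Ψt : En n → ℝ)
    (hφt_sm : ContDiff ℝ (⊤ : ℕ∞) φt) (hφt_cs : HasCompactSupport φt)
    (hφt_nn : ∀ ζ, 0 ≤ φt ζ)
    (hφt_one : ∀ ζ : En n, ‖ζ‖ ≤ 3 / 4 → φt ζ = 1)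
    (hφt_supp : ∀ ζ : En n, (1 : ℝ) < ‖ζ‖ → φt ζ = 0)
    (hΨt_sm : ContDiff ℝ (⊤ : ℕ∞) Ψt)
    (hΨt_nn : ∀ ζ, 0 ≤ Ψt ζ)
    (hΨt_one : ∀ ζ : En n, ‖ζ‖ ∈ Set.Icc (2 / 3 : ℝ) (3 / 2 : ℝ) → Ψt ζ = 1)
    (hΨt_supp : ∀ ζ : En n, ‖ζ‖ ∉ Set.Icc (1 / 2 : ℝ) (2 : ℝ) → Ψt ζ = 0)
    : ∃ c : ℝ, 0 < c ∧
        ∀ ω ν : En n, ‖ω‖ = 1 → ‖ν‖ = 1 → ∀ σ : ℝ, 0 < σ → σ < 1 →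
          ‖ω - ν‖ ≤ (1 / 16) * Real.sqrt σ →
          ∀ ζ ∈ tsupport (theta n φ Ψ ω σ),
            c * σ ^ (-((n : ℝ) - 1) / 4) ≤ theta n φt Ψt ν σ ζ ∧
              ‖‖ζ‖⁻¹ • ζ - ν‖ ≤ (3 / 8) * Real.sqrt σ := by
  obtain ⟨m, rfl⟩ : ∃ m, n = m + 1 := ⟨n - 1, by omega⟩
  obtain ⟨M, hM⟩ := hφt_sm.continuous.bounded_above_of_compact_support hφt_cs
  obtain ⟨C, hC, hlower⟩ := exists_mul_rpow_le_phiO hφt_sm.continuous hM hφt_nn hφt_one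
    hφt_supp hΨt_sm.continuous hΨt_nn hΨt_one hΨt_supp
  refine ⟨C, hC, fun ω ν _ _ σ hσ hσ1 hων ζ hζ => ?_⟩
  obtain ⟨hζσ, hζω⟩ := tsupport_theta_subset hΨ_supp hφ_supp hσ hζ
  have hdir : ‖‖ζ‖⁻¹ • ζ - ν‖ ≤ 3 / 8 * √σ :=
    calc ‖‖ζ‖⁻¹ • ζ - ν‖ ≤ ‖‖ζ‖⁻¹ • ζ - ω‖ + ‖ω - ν‖ := norm_sub_le_norm_sub_add_norm_sub _ _ _
      _ ≤ 5 / 16 * √σ + 1 / 16 * √σ := add_le_add hζω hων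
      _ = 3 / 8 * √σ := by ring
  refine ⟨?_, hdir⟩
  rw [theta, PsiS_eq_one hΨt_one hσ.le ⟨by linarith [hζσ.1], by linarith [hζσ.2]⟩, one_mul,
    Nat.cast_succ, add_sub_cancel_right]
  exact hlower ν ζ σ hσ hσ1 hζσ hdir

/-- lower bound for the modified wave packet: `θ̃_{ν,σ} ≳ σ^{-(n-1)/4}` on
`supp θ_{ω,σ}` when `|ω−ν| ≤ √σ/16`, and every `ζ ∈ supp θ_{ω,σ}` satisfies
`|ζ̂ − ν| ≤ (3/8)√σ`. -/
theorem modified_wave_packet_lower_bound (n : ℕ) (hn : 2 ≤ n)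
    (φ Ψ : En n → ℝ)
    (hφ_sm : ContDiff ℝ (⊤ : ℕ∞) φ) (hφ_cs : HasCompactSupport φ)
    (hφ_nn : ∀ ζ, 0 ≤ φ ζ)
    (hφ_rad : ∀ ζ η : En n, ‖ζ‖ = ‖η‖ → φ ζ = φ η)
    (hφ_one : ∃ ε > (0 : ℝ), ∀ ζ : En n, ‖ζ‖ ≤ ε → φ ζ = 1)
    (hφ_supp : ∀ ζ : En n, (1 : ℝ) / 4 < ‖ζ‖ → φ ζ = 0)
    (hΨ_sm : ContDiff ℝ (⊤ : ℕ∞) Ψ) (hΨ_cs : HasCompactSupport Ψ)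
    (hΨ_nn : ∀ ζ, 0 ≤ Ψ ζ)
    (hΨ_rad : ∀ ζ η : En n, ‖ζ‖ = ‖η‖ → Ψ ζ = Ψ η)
    (hΨ_supp : ∀ ζ : En n, ‖ζ‖ ∉ Set.Icc (4 / 5 : ℝ) (5 / 4 : ℝ) → Ψ ζ = 0)
    (hΨ_int : ∀ ζ : En n, ζ ≠ 0 → (∫ σ in Set.Ioi (0 : ℝ), (Ψ (σ • ζ)) ^ 2 * σ⁻¹) = 1)
    (φt Ψt : En n → ℝ)
    (hφt_sm : ContDiff ℝ (⊤ : ℕ∞) φt) (hφt_cs : HasCompactSupport φt)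
    (hφt_nn : ∀ ζ, 0 ≤ φt ζ)
    (hφt_one : ∀ ζ : En n, ‖ζ‖ ≤ 3 / 4 → φt ζ = 1)
    (hφt_supp : ∀ ζ : En n, (1 : ℝ) < ‖ζ‖ → φt ζ = 0)
    (hΨt_sm : ContDiff ℝ (⊤ : ℕ∞) Ψt) (hΨt_cs : HasCompactSupport Ψt)
    (hΨt_nn : ∀ ζ, 0 ≤ Ψt ζ)
    (hΨt_rad : ∀ ζ η : En n, ‖ζ‖ = ‖η‖ → Ψt ζ = Ψt η)
    (hΨt_one : ∀ ζ : En n, ‖ζ‖ ∈ Set.Icc (2 / 3 : ℝ) (3 / 2 : ℝ) → Ψt ζ = 1)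
    (hΨt_supp : ∀ ζ : En n, ‖ζ‖ ∉ Set.Icc (1 / 2 : ℝ) (2 : ℝ) → Ψt ζ = 0)
    (hΨt_int : ∀ ζ : En n, ζ ≠ 0 → (∫ σ in Set.Ioi (0 : ℝ), (Ψt (σ • ζ)) ^ 2 * σ⁻¹) = 1)
    : ∃ c : ℝ, 0 < c ∧
        ∀ ω ν : En n, ‖ω‖ = 1 → ‖ν‖ = 1 → ∀ σ : ℝ, 0 < σ → σ < 1 →
          ‖ω - ν‖ ≤ (1 / 16) * Real.sqrt σ →
          ∀ ζ ∈ tsupport (theta n φ Ψ ω σ),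
            c * σ ^ (-((n : ℝ) - 1) / 4) ≤ theta n φt Ψt ν σ ζ ∧
              ‖‖ζ‖⁻¹ • ζ - ν‖ ≤ (3 / 8) * Real.sqrt σ :=
  modified_wave_packet_lower_bound_general n hn φ Ψ hφ_supp hΨ_supp φt Ψt hφt_sm hφt_cs hφt_nn
    hφt_one hφt_supp hΨt_sm hΨt_nn hΨt_one hΨt_supp

end
end

section
/- Volumes of anisotropic dyadic shells: let n ≥ 2. There exist constants 0 < c ≤ C < ∞, depending only on n, such that for all ω ∈ S^{n−1}, σ ∈ (0,1) and j ∈ ℤ₊ the following holds for the Lebesgue measure of C_{j,σ}: if 2^j σ ≤ 1, then c (2^j σ)^{(n+1)/2} ≤ |C_{j,σ}| ≤ C (2^j σ)^{(n+1)/2}, and if 2^j σ > 1, then c (2^j σ)^{n/2} ≤ |C_{j,σ}| ≤ C (2^j σ)^{n/2}. Here C_{0,σ} := {z ∈ ℝⁿ : |z|² + |⟨ω,z⟩| ≤ σ} and, for j ≥ 1, C_{j,σ} := {z ∈ ℝⁿ : 2^{j−1}σ < |z|² + |⟨ω,z⟩| ≤ 2^j σ}. -/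
open MeasureTheory Real
open scoped ENNReal NNReal Classical

noncomputable section

/-- The anisotropic dyadic shell `C_{j,σ}` in the direction `ω`. -/
def Cshell (n : ℕ) (ω : En n) (σ : ℝ) (j : ℕ) : Set (En n) :=
  if j = 0 then {z : En n | ‖z‖ ^ 2 + |(inner ℝ ω z : ℝ)| ≤ σ}
  else {z : En n | 2 ^ (j - 1) * σ < ‖z‖ ^ 2 + |(inner ℝ ω z : ℝ)| ∧
    ‖z‖ ^ 2 + |(inner ℝ ω z : ℝ)| ≤ 2 ^ j * σ}


/-! The quasi-norm `‖z‖² + |⟪ω, z⟫|` is invariant under isometries carrying `ω` along, so a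
reflection reduces to `ω = e₀`, where it reads `Q z = ‖z‖² + |z₀|`. With `t = 2^j σ` the shell lies
between `{t/2 < Q ≤ t}` and `{Q ≤ t}`. On `{Q ≤ t}` every coordinate is at most `√t` and `|z₀|` is
at most `min t √t`, which gives an upper box. A lower box lets `z₀` range over `(a, b]` with
`a² + a = t/2`, `b² + b = 3t/4` and the other coordinates over `[-δ, δ]` with `δ ≍ √t`; since
`(b - a)(a + b + 1) = t/4`, its length `b - a` is of order `min t √t`. So the volume is of order
`min t √t · t^{(n-1)/2}`, which is `t^{(n+1)/2}` for `t ≤ 1` and `t^{n/2}` for `t > 1`. -/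

open Finset

noncomputable def shellScale (n : ℕ) (t : ℝ) : ℝ := min t √t * √t ^ (n - 1)

theorem shellScale_of_le_one {n : ℕ} (hn : 0 < n) {t : ℝ} (ht₀ : 0 ≤ t) (ht : t ≤ 1) :
    shellScale n t = t ^ (((n : ℝ) + 1) / 2) := by
  have hmin : min t √t = t := min_eq_left (Real.le_sqrt_of_sq_le (by nlinarith))
  rw [shellScale, hmin, Real.rpow_div_two_eq_sqrt _ ht₀]
  norm_cast
  rw [← Real.sq_sqrt ht₀, Real.sqrt_sq (Real.sqrt_nonneg t), ← pow_add]
  congr 1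
  omega

theorem shellScale_of_one_lt {n : ℕ} (hn : 0 < n) {t : ℝ} (ht : 1 < t) :
    shellScale n t = t ^ ((n : ℝ) / 2) := by
  have hmin : min t √t = √t :=
    min_eq_right ((Real.sqrt_le_left (by positivity)).mpr (by nlinarith))
  rw [shellScale, hmin, Real.rpow_div_two_eq_sqrt _ (by positivity), ← pow_succ']
  norm_cast
  congr 1
  omega

theorem exists_sq_add_self_window {t : ℝ} (ht : 0 < t) :
    ∃ a b : ℝ, 0 ≤ a ∧ a ^ 2 + a = t / 2 ∧ b ^ 2 + b = 3 * t / 4 ∧ min t √t / 8 ≤ b - a := by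
  set X := √(1 + 2 * t)
  set Y := √(1 + 3 * t)
  have hX : X ^ 2 = 1 + 2 * t := Real.sq_sqrt (by linarith)
  have hY : Y ^ 2 = 1 + 3 * t := Real.sq_sqrt (by linarith)
  have hX₁ : 1 ≤ X := Real.one_le_sqrt.mpr (by linarith)
  have hXY : X ≤ Y := Real.sqrt_le_sqrt (by linarith)
  refine ⟨(X - 1) / 2, (Y - 1) / 2, by linarith, by linear_combination hX / 4,
    by linear_combination hY / 4, ?_⟩
  have hprod : (Y - X) * (X + Y) = t := by linear_combination hY - hX
  rcases le_or_gt t 1 with h | h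
  · have hY₂ : Y ≤ 2 := (Real.sqrt_le_left zero_le_two).mpr (by linarith)
    have := mul_le_mul_of_nonneg_left (show X + Y ≤ 4 by linarith) (sub_nonneg.mpr hXY)
    have := min_le_left t √t
    linarith
  · have hs : √t * √t = t := Real.mul_self_sqrt ht.le
    have hs₀ : 0 < √t := Real.sqrt_pos.mpr ht
    have hY₂ : Y ≤ 2 * √t := (Real.sqrt_le_left (by positivity)).mpr (by nlinarith)
    have := mul_le_mul_of_nonneg_left (show X + Y ≤ 4 * √t by linarith) (sub_nonneg.mpr hXY)
    have : √t ≤ 4 * (Y - X) := le_of_mul_le_mul_left (by nlinarith) hs₀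
    have := min_le_right t √t
    linarith

section Box

variable {ι : Type*} [Fintype ι]

theorem EuclideanSpace.volume_setOf_forall_apply_mem (s : ι → Set ℝ) :
    volume {z : EuclideanSpace ℝ ι | ∀ i, z i ∈ s i} = ∏ i, volume (s i) := by
  rw [← volume_pi_pi,
    ← (EuclideanSpace.volume_preserving_symm_measurableEquiv_toLp ι).measure_preimage_equiv]
  congr 1
  ext z
  simp

theorem EuclideanSpace.volume_setOf_apply_mem_and_forall_ne (i₀ : ι) (A B : Set ℝ) :
    volume {z : EuclideanSpace ℝ ι | z i₀ ∈ A ∧ ∀ i ≠ i₀, z i ∈ B} =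
      volume A * volume B ^ (Fintype.card ι - 1) := by
  classical
  have hbox : {z : EuclideanSpace ℝ ι | z i₀ ∈ A ∧ ∀ i ≠ i₀, z i ∈ B} =
      {z | ∀ i, z i ∈ Function.update (fun _ ↦ B) i₀ A i} := by
    ext z
    refine ⟨fun ⟨h₀, h⟩ i ↦ ?_,
      fun h ↦ ⟨by simpa using h i₀, fun i hi ↦ by simpa [hi] using h i⟩⟩
    by_cases hi : i = i₀
    · subst hi; simpa using h₀
    · simpa [hi] using h i hi
  rw [hbox, EuclideanSpace.volume_setOf_forall_apply_mem, Fintype.prod_eq_mul_prod_compl i₀,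
    Function.update_self,
    prod_congr rfl fun i hi ↦ by rw [Function.update_of_ne (by simpa using hi)], prod_const,
    card_compl, card_singleton]

theorem EuclideanSpace.real_norm_sq_eq_sq_add_sum_erase (z : EuclideanSpace ℝ ι) (i₀ : ι) :
    ‖z‖ ^ 2 = z i₀ ^ 2 + ∑ i ∈ univ.erase i₀, z i ^ 2 := by
  rw [EuclideanSpace.real_norm_sq_eq, ← add_sum_erase _ _ (mem_univ i₀)]

theorem volume_setOf_sq_norm_add_abs_apply_le_le (i₀ : ι) {t : ℝ} (ht : 0 ≤ t) :
    volume {z : EuclideanSpace ℝ ι | ‖z‖ ^ 2 + |z i₀| ≤ t} ≤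
      ENNReal.ofReal (2 ^ Fintype.card ι * shellScale (Fintype.card ι) t) := by
  have hcoord : ∀ z : EuclideanSpace ℝ ι, ‖z‖ ^ 2 + |z i₀| ≤ t → ∀ i, |z i| ≤ √t := by
    intro z hz i
    refine Real.abs_le_sqrt ?_
    have := single_le_sum (fun j _ ↦ sq_nonneg (z j)) (mem_univ i)
    rw [← EuclideanSpace.real_norm_sq_eq] at this
    linarith [abs_nonneg (z i₀)]
  have hbox : {z : EuclideanSpace ℝ ι | ‖z‖ ^ 2 + |z i₀| ≤ t} ⊆
      {z | z i₀ ∈ Set.Icc (-min t √t) (min t √t) ∧ ∀ i ≠ i₀, z i ∈ Set.Icc (-√t) √t} := by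
    intro z hz
    refine ⟨abs_le.mp (le_min ?_ (hcoord z hz i₀)), fun i _ ↦ abs_le.mp (hcoord z hz i)⟩
    linarith [sq_nonneg ‖z‖, hz.out]
  obtain ⟨k, hk⟩ : ∃ k, Fintype.card ι = k + 1 :=
    Nat.exists_eq_add_one.mpr (Fintype.card_pos_iff.mpr ⟨i₀⟩)
  refine (measure_mono hbox).trans (le_of_eq ?_)
  rw [EuclideanSpace.volume_setOf_apply_mem_and_forall_ne, Real.volume_Icc, Real.volume_Icc,
    sub_neg_eq_add, sub_neg_eq_add, ← ENNReal.ofReal_pow (by positivity),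
    ← ENNReal.ofReal_mul (by positivity), shellScale, hk]
  congr 1
  simp only [add_tsub_cancel_right, pow_succ]
  ring

theorem sq_norm_add_abs_apply_bounds_of_mem_box {i₀ : ι} {a b δ : ℝ} (ha : 0 ≤ a)
    {z : EuclideanSpace ℝ ι} (hz₀ : z i₀ ∈ Set.Ioc a b)
    (hz : ∀ i ≠ i₀, z i ∈ Set.Icc (-δ) δ) :
    a ^ 2 + a < ‖z‖ ^ 2 + |z i₀| ∧
      ‖z‖ ^ 2 + |z i₀| ≤ b ^ 2 + b + (Fintype.card ι - 1 : ℕ) * δ ^ 2 := by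
  have hrest : ∑ i ∈ univ.erase i₀, z i ^ 2 ≤ (Fintype.card ι - 1 : ℕ) * δ ^ 2 := by
    rw [← card_univ, ← card_erase_of_mem (mem_univ i₀), ← nsmul_eq_mul]
    exact sum_le_card_nsmul _ _ _ fun i hi ↦
      sq_le_sq' (hz i (ne_of_mem_erase hi)).1 (hz i (ne_of_mem_erase hi)).2
  have hrest₀ : 0 ≤ ∑ i ∈ univ.erase i₀, z i ^ 2 := sum_nonneg fun i _ ↦ sq_nonneg (z i)
  obtain ⟨haz, hzb⟩ := hz₀
  rw [EuclideanSpace.real_norm_sq_eq_sq_add_sum_erase z i₀, abs_of_pos (ha.trans_lt haz)]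
  constructor <;> nlinarith

theorem ofReal_le_volume_setOf_sq_norm_add_abs_apply_mem_Ioc (i₀ : ι) {t : ℝ} (ht : 0 < t) :
    ENNReal.ofReal
        ((8 * √(Fintype.card ι) ^ (Fintype.card ι - 1))⁻¹ * shellScale (Fintype.card ι) t) ≤
      volume {z : EuclideanSpace ℝ ι | ‖z‖ ^ 2 + |z i₀| ∈ Set.Ioc (t / 2) t} := by
  set d := Fintype.card ι
  have hd : 0 < (d : ℝ) := by exact_mod_cast Fintype.card_pos_iff.mpr ⟨i₀⟩
  obtain ⟨a, b, ha, ha', hb', hab⟩ := exists_sq_add_self_window ht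
  set δ := √t / (2 * √d)
  have hδ : (d - 1 : ℕ) * δ ^ 2 ≤ t / 4 := by
    have : δ ^ 2 = t / (4 * d) := by
      rw [div_pow, mul_pow, Real.sq_sqrt ht.le, Real.sq_sqrt hd.le]; ring
    have hsplit : ((d - 1 : ℕ) : ℝ) * (t / (4 * d)) = t / 4 - t / (4 * d) := by
      rw [Nat.cast_sub (by exact_mod_cast hd)]; field_simp; ring
    rw [this, hsplit]
    linarith [show 0 < t / (4 * d) by positivity]
  have hbox : {z : EuclideanSpace ℝ ι | z i₀ ∈ Set.Ioc a b ∧ ∀ i ≠ i₀, z i ∈ Set.Icc (-δ) δ} ⊆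
      {z | ‖z‖ ^ 2 + |z i₀| ∈ Set.Ioc (t / 2) t} := by
    intro z ⟨hz₀, hz⟩
    have := sq_norm_add_abs_apply_bounds_of_mem_box ha hz₀ hz
    constructor <;> linarith [this.1, this.2]
  refine le_trans ?_ (measure_mono hbox)
  have hmin : 0 ≤ min t √t := le_min ht.le (Real.sqrt_nonneg t)
  rw [EuclideanSpace.volume_setOf_apply_mem_and_forall_ne, Real.volume_Ioc, Real.volume_Icc,
    sub_neg_eq_add, ← ENNReal.ofReal_pow (by positivity), ← ENNReal.ofReal_mul (by linarith)]
  refine ENNReal.ofReal_le_ofReal ?_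
  have h2δ : δ + δ = √t / √d := by simp only [δ]; field_simp; ring
  calc (8 * √d ^ (d - 1))⁻¹ * shellScale d t = min t √t / 8 * (δ + δ) ^ (d - 1) := by
        rw [shellScale, h2δ, div_pow]; ring
    _ ≤ (b - a) * (δ + δ) ^ (d - 1) := by gcongr

end Box

section Shell

variable {n : ℕ}

theorem preimage_Cshell (R : En n ≃ₗᵢ[ℝ] En n) (ω : En n) (σ : ℝ) (j : ℕ) :
    R ⁻¹' Cshell n (R ω) σ j = Cshell n ω σ j := by
  ext z
  unfold Cshell
  split_ifs <;> simp only [Set.mem_preimage, Set.mem_ofPred_eq, R.norm_map, R.inner_map_map]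

theorem volume_Cshell_eq_of_norm_eq {ω ω' : En n} (h : ‖ω‖ = ‖ω'‖) (σ : ℝ) (j : ℕ) :
    volume (Cshell n ω σ j) = volume (Cshell n ω' σ j) := by
  set R := (ℝ ∙ (ω - ω'))ᗮ.reflection
  calc volume (Cshell n ω σ j) = volume (R.toMeasurableEquiv ⁻¹' Cshell n (R ω) σ j) := by
        rw [← preimage_Cshell R ω σ j]; rfl
    _ = volume (Cshell n ω' σ j) := by
        rw [R.measurePreserving.measure_preimage_equiv, Submodule.reflection_sub h]

theorem Cshell_subset (ω : En n) (σ : ℝ) (j : ℕ) :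
    Cshell n ω σ j ⊆ {z | ‖z‖ ^ 2 + |(inner ℝ ω z : ℝ)| ≤ 2 ^ j * σ} := by
  intro z hz
  unfold Cshell at hz
  split_ifs at hz with hj
  · simpa [hj] using hz
  · exact hz.2

theorem subset_Cshell (ω : En n) (σ : ℝ) (j : ℕ) :
    {z | ‖z‖ ^ 2 + |(inner ℝ ω z : ℝ)| ∈ Set.Ioc (2 ^ j * σ / 2) (2 ^ j * σ)} ⊆
      Cshell n ω σ j := by
  intro z hz
  unfold Cshell
  split_ifs with hj
  · simpa [hj] using hz.2
  · have h2 : (2 : ℝ) ^ j * σ / 2 = 2 ^ (j - 1) * σ := by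
      rw [show j = j - 1 + 1 by omega, pow_succ, Nat.add_sub_cancel]; ring
    exact ⟨h2 ▸ hz.1, hz.2⟩

theorem shellScale_nonneg (n : ℕ) {t : ℝ} (ht : 0 ≤ t) : 0 ≤ shellScale n t := by
  unfold shellScale; positivity

theorem pos_of_norm_eq_one {ω : En n} (hω : ‖ω‖ = 1) : 0 < n :=
  Nat.pos_of_ne_zero fun h ↦ by subst h; simp [Subsingleton.elim ω 0] at hω

theorem volume_Cshell_bounds {ω : En n} (hω : ‖ω‖ = 1) {σ : ℝ} (hσ : 0 < σ) (j : ℕ) :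
    (8 * √n ^ (n - 1))⁻¹ * shellScale n (2 ^ j * σ) ≤ (volume (Cshell n ω σ j)).toReal ∧
      (volume (Cshell n ω σ j)).toReal ≤ 2 ^ n * shellScale n (2 ^ j * σ) := by
  set i₀ : Fin n := ⟨0, pos_of_norm_eq_one hω⟩
  set e : En n := EuclideanSpace.single i₀ 1
  have he : ∀ z : En n, (inner ℝ e z : ℝ) = z i₀ := by simp [e, EuclideanSpace.inner_single_left]
  rw [volume_Cshell_eq_of_norm_eq (hω.trans (by simp [e]) : ‖ω‖ = ‖e‖)]
  have ht : 0 < 2 ^ j * σ := by positivity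
  have hupper : volume (Cshell n e σ j) ≤ ENNReal.ofReal (2 ^ n * shellScale n (2 ^ j * σ)) := by
    have := volume_setOf_sq_norm_add_abs_apply_le_le i₀ ht.le
    simp only [Fintype.card_fin, ← he] at this
    exact (measure_mono (Cshell_subset e σ j)).trans this
  refine ⟨?_, ENNReal.toReal_le_of_le_ofReal
    (mul_nonneg (by positivity) (shellScale_nonneg n ht.le)) hupper⟩
  rw [← ENNReal.ofReal_le_iff_le_toReal (ne_top_of_le_ne_top ENNReal.ofReal_ne_top hupper)]
  have := ofReal_le_volume_setOf_sq_norm_add_abs_apply_mem_Ioc i₀ ht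
  simp only [Fintype.card_fin, ← he] at this
  exact this.trans (measure_mono (subset_Cshell e σ j))

end Shell

theorem volume_anisotropic_shells_general (n : ℕ) :
    ∃ c C : ℝ, 0 < c ∧ c ≤ C ∧
      ∀ ω : En n, ‖ω‖ = 1 → ∀ σ : ℝ, 0 < σ → σ < 1 → ∀ j : ℕ,
        ((2 : ℝ) ^ j * σ ≤ 1 →
          c * ((2 : ℝ) ^ j * σ) ^ (((n : ℝ) + 1) / 2) ≤ (volume (Cshell n ω σ j)).toReal ∧
            (volume (Cshell n ω σ j)).toReal ≤ C * ((2 : ℝ) ^ j * σ) ^ (((n : ℝ) + 1) / 2)) ∧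
        (1 < (2 : ℝ) ^ j * σ →
          c * ((2 : ℝ) ^ j * σ) ^ ((n : ℝ) / 2) ≤ (volume (Cshell n ω σ j)).toReal ∧
            (volume (Cshell n ω σ j)).toReal ≤ C * ((2 : ℝ) ^ j * σ) ^ ((n : ℝ) / 2)) := by
  have hsqrt : 1 ≤ √n ^ (n - 1) := by
    rcases n with _ | n
    · simp
    · exact one_le_pow₀ (Real.one_le_sqrt.mpr (by simp))
  refine ⟨(8 * √n ^ (n - 1))⁻¹, 2 ^ n, by positivity,
    (inv_le_one_of_one_le₀ (by linarith)).trans (one_le_pow₀ one_le_two), ?_⟩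
  intro ω hω σ hσ _ j
  have hn := pos_of_norm_eq_one hω
  obtain ⟨hlower, hupper⟩ := volume_Cshell_bounds hω hσ j
  refine ⟨fun ht ↦ ?_, fun ht ↦ ?_⟩
  · rw [← shellScale_of_le_one hn (by positivity) ht]
    exact ⟨hlower, hupper⟩
  · rw [← shellScale_of_one_lt hn ht]
    exact ⟨hlower, hupper⟩

/-- volumes of anisotropic dyadic shells. -/
theorem volume_anisotropic_shells (n : ℕ) (hn : 2 ≤ n) :
    ∃ c C : ℝ, 0 < c ∧ c ≤ C ∧
      ∀ ω : En n, ‖ω‖ = 1 → ∀ σ : ℝ, 0 < σ → σ < 1 → ∀ j : ℕ,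
        ((2 : ℝ) ^ j * σ ≤ 1 →
          c * ((2 : ℝ) ^ j * σ) ^ (((n : ℝ) + 1) / 2) ≤ (volume (Cshell n ω σ j)).toReal ∧
            (volume (Cshell n ω σ j)).toReal ≤ C * ((2 : ℝ) ^ j * σ) ^ (((n : ℝ) + 1) / 2)) ∧
        (1 < (2 : ℝ) ^ j * σ →
          c * ((2 : ℝ) ^ j * σ) ^ ((n : ℝ) / 2) ≤ (volume (Cshell n ω σ j)).toReal ∧
            (volume (Cshell n ω σ j)).toReal ≤ C * ((2 : ℝ) ^ j * σ) ^ ((n : ℝ) / 2)) :=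
  volume_anisotropic_shells_general n

end
end
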